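/- The groups G₁ = ⟨a, b, c | ab = ba, bc = c b⁻¹⟩ and G₂ = ⟨x, y, z | yx = x y⁻¹, yz = z y⁻¹⟩ are isomorphic. -/

import Mathlib

/-- Relations for `G₁ = ⟨a, b, c | ab = ba, bc = c b⁻¹⟩`. -/
def g1Rels : Set (FreeGroup (Fin 3)) :=
  { FreeGroup.of 0 * FreeGroup.of 1 * (FreeGroup.of 0)⁻¹ * (FreeGroup.of 1)⁻¹,
    FreeGroup.of 1 * FreeGroup.of 2 * FreeGroup.of 1 * (FreeGroup.of 2)⁻¹ }

/-- Relations for `G₂ = ⟨x, y, z | yx = x y⁻¹, yz = z y⁻¹⟩`. -/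
def g2Rels : Set (FreeGroup (Fin 3)) :=
  { FreeGroup.of 1 * FreeGroup.of 0 * FreeGroup.of 1 * (FreeGroup.of 0)⁻¹,
    FreeGroup.of 1 * FreeGroup.of 2 * FreeGroup.of 1 * (FreeGroup.of 2)⁻¹ }


open PresentedGroup

theorem PresentedGroup.lift_of_eq_one {α : Type*} {rels : Set (FreeGroup α)} :
    ∀ r ∈ rels, FreeGroup.lift (of (rels := rels)) r = 1 := by
  have : FreeGroup.lift (of (rels := rels)) = mk rels := FreeGroup.ext_hom _ _ fun _ ↦ by simp [of]
  simpa [this] using fun _ ↦ one_of_mem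

section Relations

variable {G : Type*} [Group G]

/-- Both `x` and `z` invert `y` under conjugation, so `x z⁻¹` centralizes it. -/
theorem commutator_mul_inv_eq_one_of_inverts {x y z : G} (hx : y * x * y * x⁻¹ = 1)
    (hz : y * z * y * z⁻¹ = 1) : x * z⁻¹ * y * (x * z⁻¹)⁻¹ * y⁻¹ = 1 :=
  calc x * z⁻¹ * y * (x * z⁻¹)⁻¹ * y⁻¹
      = x * z⁻¹ * (y * z * y * z⁻¹) * z * y⁻¹ * x⁻¹ * y⁻¹ := by group
    _ = (y * x * y * x⁻¹)⁻¹ := by rw [hz]; group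
    _ = 1 := by rw [hx, inv_one]

/-- `a` centralizes `b` and `c` inverts it, so `a c` inverts it. -/
theorem inverts_mul_of_commutator_eq_one {a b c : G} (hab : a * b * a⁻¹ * b⁻¹ = 1)
    (hbc : b * c * b * c⁻¹ = 1) : b * (a * c) * b * (a * c)⁻¹ = 1 :=
  calc b * (a * c) * b * (a * c)⁻¹ = b * a * b⁻¹ * (b * c * b * c⁻¹) * a⁻¹ := by group
    _ = (a * b * a⁻¹ * b⁻¹)⁻¹ := by rw [hbc]; group
    _ = 1 := by rw [hab, inv_one]

end Relations

def g1ToG2 : PresentedGroup g1Rels →* PresentedGroup g2Rels :=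
  toGroup (f := ![of 0 * (of 2)⁻¹, of 1, of 2]) <| by
    obtain ⟨hyx, hyz⟩ := by simpa [g2Rels] using lift_of_eq_one (rels := g2Rels)
    simpa [g1Rels] using ⟨commutator_mul_inv_eq_one_of_inverts hyx hyz, hyz⟩

def g2ToG1 : PresentedGroup g2Rels →* PresentedGroup g1Rels :=
  toGroup (f := ![of 0 * of 2, of 1, of 2]) <| by
    obtain ⟨hab, hbc⟩ := by simpa [g1Rels] using lift_of_eq_one (rels := g1Rels)
    simpa [g2Rels] using ⟨inverts_mul_of_commutator_eq_one hab hbc, hbc⟩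

theorem g1_iso_g2 :
    Nonempty (PresentedGroup g1Rels ≃* PresentedGroup g2Rels) :=
  ⟨g1ToG2.toMulEquiv g2ToG1 (by ext i; fin_cases i <;> simp [g1ToG2, g2ToG1])
    (by ext i; fin_cases i <;> simp [g1ToG2, g2ToG1])⟩
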